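/- arXiv:1303.4212 — 2 statements merged into one kernel-verified Lean document; each statement's English description precedes it below -/
import Mathlib

section
/- Let A, B ∈ 𝒢(Z,C) be nonempty. Then 0⁺A ⊕ 0⁺B = cl co (0⁺A ∪ 0⁺B) and 0⁺A ⊕ 0⁺B ⊆ 0⁺(A ⊕ B). Moreover, if A ⊇ B then 0⁺A ⊇ 0⁺B. -/
open Set Pointwise

noncomputable section

variable {Z : Type*} [AddCommGroup Z] [Module ℝ Z] [TopologicalSpace Z]

/-- The inf-residual `A ⊖ B = {z : B + {z} ⊆ A}`. -/
def resid (A B : Set Z) : Set Z := {z : Z | B + {z} ⊆ A}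

/-- The recession cone `0⁺A`, with the convention `0⁺∅ = ∅`. -/
def recCone (A : Set Z) : Set Z := {z : Z | A.Nonempty ∧ A + {z} ⊆ A}

/-- `A ⊕ B = cl (A + B)`. -/
def oplus (A B : Set Z) : Set Z := closure (A + B)

/-- Membership in `𝒢(Z,C)`: `A = cl co (A + C)`. -/
def IsG (C A : Set Z) : Prop := A = closure (convexHull ℝ (A + C))

/-- The set `C⁻ \ {0}` of nonzero elements of the negative dual cone. -/
def negDualNZ (C : Set Z) : Set (Z →L[ℝ] ℝ) :=
  {p : Z →L[ℝ] ℝ | (∀ c ∈ C, p c ≤ 0) ∧ p ≠ 0}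

/-- `inf {-z*(z) : z ∈ A}` as an extended real. -/
def scal (p : Z →L[ℝ] ℝ) (A : Set Z) : EReal :=
  sInf ((fun z => ((-(p z) : ℝ) : EReal)) '' A)

/-- Support function `σ(z*|A) = sup {z*(z) : z ∈ A}` as an extended real. -/
def suppF (p : Z →L[ℝ] ℝ) (A : Set Z) : EReal :=
  sSup ((fun z => ((p z : ℝ) : EReal)) '' A)

/-- Inf-residuation on the extended reals: `r ⊖ s = inf {t ∈ ℝ : r ≤ s + t}`. -/
def eresid (r s : EReal) : EReal :=
  sInf ((fun t : ℝ => (t : EReal)) '' {t : ℝ | r ≤ s + (t : EReal)})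

variable {X : Type*} [AddCommGroup X] [Module ℝ X]

/-- The scalarization `φ_{f,z*}(x) = inf {-z*(z) : z ∈ f(x)}`. -/
def phi (f : X → Set Z) (p : Z →L[ℝ] ℝ) (x : X) : EReal := scal p (f x)

/-- Convexity for set-valued functions:
`f(t x₁ + (1-t) x₂) ⊇ cl (t f(x₁) + (1-t) f(x₂))`. -/
def ConvexSV (f : X → Set Z) : Prop :=
  ∀ x₁ x₂ : X, ∀ t : ℝ, t ∈ Ioo (0:ℝ) 1 →
    closure (t • f x₁ + (1 - t) • f x₂) ⊆ f (t • x₁ + (1 - t) • x₂)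

/-- The set-valued directional derivative
`f′(x,u) = ⋂_{t₀>0} cl co ⋃_{0<t<t₀} (1/t)•(f(x+tu) ⊖ f(x))`. -/
def sder (f : X → Set Z) (x u : X) : Set Z :=
  ⋂ t₀ ∈ Ioi (0:ℝ), closure (convexHull ℝ
    (⋃ t ∈ Ioo (0:ℝ) t₀, (1 / t) • resid (f (x + t • u)) (f x)))

/-- The scalar Dini derivative `φ′_{f,z*}(x,u) = inf_{t>0} (1/t)(φ(x+tu) ⊖ φ(x))`. -/
def phiDer (f : X → Set Z) (p : Z →L[ℝ] ℝ) (x u : X) : EReal :=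
  ⨅ t ∈ Ioi (0:ℝ), (((1 / t : ℝ)) : EReal) * eresid (phi f p (x + t • u)) (phi f p x)

end

/-!
Members of `𝒢(Z,C)` are closed and convex, so their recession cones are convex cones
containing `0`; for such cones `K₁ + K₂ = co (K₁ ∪ K₂)`, since `k₁ + k₂ = ½ (2k₁) + ½ (2k₂)`.
Translations preserve `A + B` and commute with closure, so `0⁺A + 0⁺B ⊆ 0⁺(A ⊕ B)`, and the latter
cone is closed. For monotonicity, if `z ∈ 0⁺B` and `b ∈ B ⊆ A`, then every `a ∈ A` is joined by a
segment in `A` to `b + n z`; the points `a + z + (b - a)/n` on these segments tend to `a + z`.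
-/

open Filter Topology

section RecessionCone

variable {Z : Type*} [AddCommGroup Z]

theorem mem_recCone_iff {A : Set Z} {z : Z} :
    z ∈ recCone A ↔ A.Nonempty ∧ ∀ a ∈ A, a + z ∈ A := by
  simp only [recCone, add_singleton, image_subset_iff]
  rfl

theorem zero_mem_recCone {A : Set Z} (hA : A.Nonempty) : (0 : Z) ∈ recCone A :=
  mem_recCone_iff.2 ⟨hA, fun a ha => by rwa [add_zero]⟩

theorem recCone_add_subset (A B : Set Z) : recCone A + recCone B ⊆ recCone (A + B) := by
  rintro _ ⟨z₁, hz₁, z₂, hz₂, rfl⟩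
  obtain ⟨hA, hz₁⟩ := mem_recCone_iff.1 hz₁
  obtain ⟨hB, hz₂⟩ := mem_recCone_iff.1 hz₂
  refine mem_recCone_iff.2 ⟨hA.add hB, ?_⟩
  rintro _ ⟨a, ha, b, hb, rfl⟩
  exact ⟨a + z₁, hz₁ a ha, b + z₂, hz₂ b hb, add_add_add_comm a z₁ b z₂⟩

section Topology

variable [TopologicalSpace Z] [ContinuousAdd Z]

theorem isClosed_recCone {A : Set Z} (hA : IsClosed A) : IsClosed (recCone A) := by
  rcases A.eq_empty_or_nonempty with rfl | hne
  · simp [recCone]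
  have hrec : recCone A = ⋂ a ∈ A, (a + ·) ⁻¹' A := by
    ext z
    simp only [mem_recCone_iff, hne, true_and, mem_iInter, mem_preimage]
  rw [hrec]
  exact isClosed_biInter fun a _ => hA.preimage (continuous_const_add a)

theorem recCone_subset_recCone_closure (S : Set Z) : recCone S ⊆ recCone (closure S) := by
  intro z hz
  obtain ⟨hne, hz⟩ := mem_recCone_iff.1 hz
  refine mem_recCone_iff.2 ⟨hne.closure, fun x hx => ?_⟩
  have hmaps : MapsTo (· + z) S S := hz
  exact hmaps.closure (continuous_add_const z) hx

end Topology

section Module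

variable [Module ℝ Z]

theorem add_natCast_smul_mem_of_mem_recCone {A : Set Z} {z a : Z} (hz : z ∈ recCone A)
    (ha : a ∈ A) (n : ℕ) : a + (n : ℝ) • z ∈ A := by
  induction n with
  | zero => simpa using ha
  | succ n ih =>
    rw [Nat.cast_succ, add_smul, one_smul, ← add_assoc]
    exact (mem_recCone_iff.1 hz).2 _ ih

theorem convex_recCone {A : Set Z} (hA : Convex ℝ A) : Convex ℝ (recCone A) := by
  intro z₁ hz₁ z₂ hz₂ s t hs ht hst
  obtain ⟨hne, hz₁⟩ := mem_recCone_iff.1 hz₁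
  refine mem_recCone_iff.2 ⟨hne, fun a ha => ?_⟩
  have hcomb : a + (s • z₁ + t • z₂) = s • (a + z₁) + t • (a + z₂) := by
    rw [smul_add, smul_add, add_add_add_comm, ← add_smul, hst, one_smul]
  rw [hcomb]
  exact hA (hz₁ a ha) ((mem_recCone_iff.1 hz₂).2 a ha) hs ht hst

theorem smul_mem_recCone {A : Set Z} (hA : Convex ℝ A) {z : Z} (hz : z ∈ recCone A)
    {r : ℝ} (hr : 0 ≤ r) : r • z ∈ recCone A := by
  refine mem_recCone_iff.2 ⟨(mem_recCone_iff.1 hz).1, fun a ha => ?_⟩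
  obtain ⟨n, hrn⟩ := exists_nat_ge r
  rcases hr.eq_or_lt with rfl | hr
  · rwa [zero_smul, add_zero]
  have hn : (0 : ℝ) < n := hr.trans_le hrn
  -- `a + r • z` lies on the segment from `a` to `a + n • z`
  have hseg := hA.add_smul_mem ha (add_natCast_smul_mem_of_mem_recCone hz ha n)
    ⟨div_nonneg hr.le hn.le, (div_le_one hn).2 hrn⟩
  rwa [smul_smul, div_mul_cancel₀ r hn.ne'] at hseg

theorem add_eq_convexHull_union_of_cone {K₁ K₂ : Set Z} (h₁ : Convex ℝ K₁) (h₂ : Convex ℝ K₂)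
    (h₁0 : (0 : Z) ∈ K₁) (h₂0 : (0 : Z) ∈ K₂)
    (h₁s : ∀ z ∈ K₁, ∀ r : ℝ, 0 ≤ r → r • z ∈ K₁) (h₂s : ∀ z ∈ K₂, ∀ r : ℝ, 0 ≤ r → r • z ∈ K₂) :
    K₁ + K₂ = convexHull ℝ (K₁ ∪ K₂) := by
  refine Subset.antisymm ?_ (convexHull_min ?_ (h₁.add h₂))
  · rintro _ ⟨z₁, hz₁, z₂, hz₂, rfl⟩
    have hmid := convex_convexHull ℝ (K₁ ∪ K₂)
      (subset_convexHull ℝ _ (Or.inl (h₁s z₁ hz₁ 2 zero_le_two)))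
      (subset_convexHull ℝ _ (Or.inr (h₂s z₂ hz₂ 2 zero_le_two)))
      (by norm_num : (0 : ℝ) ≤ 1 / 2) (by norm_num : (0 : ℝ) ≤ 1 / 2) (by norm_num)
    rwa [smul_smul, smul_smul, one_div_mul_cancel two_ne_zero, one_smul, one_smul] at hmid
  · rintro z (hz | hz)
    · exact ⟨z, hz, 0, h₂0, add_zero z⟩
    · exact ⟨0, h₁0, z, hz, zero_add z⟩

variable [TopologicalSpace Z] [ContinuousAdd Z] [ContinuousSMul ℝ Z]

theorem IsClosed.add_mem_of_forall_add_natCast_smul_mem {A : Set Z}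
    (hA : IsClosed A) (hconv : Convex ℝ A) {a b z : Z} (ha : a ∈ A)
    (hray : ∀ n : ℕ, b + (n : ℝ) • z ∈ A) : a + z ∈ A := by
  have hpt : ∀ n : ℕ, a + z + (1 / ((n : ℝ) + 1)) • (b - a) ∈ A := by
    intro n
    have hn : (n : ℝ) + 1 ≠ 0 := by positivity
    have hfar : b + ((n : ℝ) + 1) • z ∈ A := by simpa only [Nat.cast_succ] using hray (n + 1)
    have hseg := hconv.add_smul_sub_mem (t := 1 / ((n : ℝ) + 1)) ha hfar
      ⟨by positivity, div_le_one_of_le₀ (by simp) (by positivity)⟩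
    convert hseg using 1
    rw [add_sub_right_comm, smul_add, smul_smul, one_div_mul_cancel hn, one_smul]
    abel
  have hlim : Tendsto (fun n : ℕ => a + z + (1 / ((n : ℝ) + 1)) • (b - a)) atTop (𝓝 (a + z)) := by
    have h := ((tendsto_one_div_add_atTop_nhds_zero_nat (𝕜 := ℝ)).smul_const (b - a)).const_add
      (a + z)
    rwa [zero_smul, add_zero] at h
  exact hA.mem_of_tendsto hlim (Eventually.of_forall hpt)

theorem recCone_mono {A B : Set Z} (hA : IsClosed A) (hconv : Convex ℝ A)
    (hBA : B ⊆ A) : recCone B ⊆ recCone A := by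
  intro z hz
  obtain ⟨⟨b, hb⟩, -⟩ := mem_recCone_iff.1 hz
  refine mem_recCone_iff.2 ⟨⟨b, hBA hb⟩, fun a ha => ?_⟩
  exact hA.add_mem_of_forall_add_natCast_smul_mem hconv ha
    fun n => hBA (add_natCast_smul_mem_of_mem_recCone hz hb n)

end Module

end RecessionCone

section IsG

variable {Z : Type*} [AddCommGroup Z] [Module ℝ Z] [TopologicalSpace Z] {C A : Set Z}

theorem IsG.isClosed (hA : IsG C A) : IsClosed A := by
  rw [hA]
  exact isClosed_closure

theorem IsG.convex [IsTopologicalAddGroup Z] [ContinuousSMul ℝ Z] (hA : IsG C A) :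
    Convex ℝ A := by
  rw [hA]
  exact (convex_convexHull ℝ _).closure

end IsG

theorem stmt_2_general
  {Z : Type*} [AddCommGroup Z] [Module ℝ Z] [TopologicalSpace Z]
  [IsTopologicalAddGroup Z] [ContinuousSMul ℝ Z]
  (C : Set Z)
  (A B : Set Z) (hA : IsG C A) (hB : IsG C B)
  (hAne : A.Nonempty) (hBne : B.Nonempty) :
    oplus (recCone A) (recCone B) = closure (convexHull ℝ (recCone A ∪ recCone B))
    ∧ oplus (recCone A) (recCone B) ⊆ recCone (oplus A B)
    ∧ (B ⊆ A → recCone B ⊆ recCone A) := by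
  refine ⟨?_, ?_, recCone_mono hA.isClosed hA.convex⟩
  · rw [oplus, add_eq_convexHull_union_of_cone (convex_recCone hA.convex)
      (convex_recCone hB.convex) (zero_mem_recCone hAne) (zero_mem_recCone hBne)
      (fun _ hz _ => smul_mem_recCone hA.convex hz) (fun _ hz _ => smul_mem_recCone hB.convex hz)]
  · exact closure_minimal ((recCone_add_subset A B).trans (recCone_subset_recCone_closure _))
      (isClosed_recCone isClosed_closure)

theorem stmt_2
  {Z : Type*} [AddCommGroup Z] [Module ℝ Z] [TopologicalSpace Z]
  [IsTopologicalAddGroup Z] [ContinuousSMul ℝ Z] [LocallyConvexSpace ℝ Z] [T2Space Z]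
  (C : Set Z) (hCclosed : IsClosed C) (hCconv : Convex ℝ C)
  (hCcone : ∀ c ∈ C, ∀ r : ℝ, 0 < r → r • c ∈ C) (hC0 : (0:Z) ∈ C)
  (A B : Set Z) (hA : IsG C A) (hB : IsG C B)
  (hAne : A.Nonempty) (hBne : B.Nonempty) :
    oplus (recCone A) (recCone B) = closure (convexHull ℝ (recCone A ∪ recCone B))
    ∧ oplus (recCone A) (recCone B) ⊆ recCone (oplus A B)
    ∧ (B ⊆ A → recCone B ⊆ recCone A) :=
  stmt_2_general C A B hA hB hAne hBne
end

section
/- Let f : X → 𝒢(Z,C) be a convex function and x₀ ∈ dom f. Then f(x₀) = cl co ⋃_{x∈X} f(x) holds if and only if [x₀ solves the strict set-valued Minty inequality (MVI_I): 0 ∈ f′(x, x₀−x) for all x ∈ X, and for every x ∈ X the segment restriction of f is lattice lower semicontinuous at 0, i.e. f(x₀) ⊇ ⋂_{t₀∈(0,1]} cl co ⋃_{0≤t<t₀} f(x₀ + t(x−x₀))]. Moreover, if x₀ solves the strict scalarized Minty inequality (mvi_I): φ′_{f,z*}(x, x₀−x) ≤ 0 for all x ∈ X and all z* ∈ C⁻∖{0},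 and for every x ∈ X and every z* ∈ C⁻∖{0} the function t ↦ φ_{f,z*}(x₀ + t(x−x₀)) on [0,1] is lower semicontinuous at 0, then f(x₀) = cl co ⋃_{x∈X} f(x). -/
open Set Pointwise

/-!
Both conditions are reduced to the scalarizations `φ = φ_{f,z*}`, `z* ∈ C⁻ \ {0}`, since
`0 ∈ f′(x, u)` already gives `φ′(x, u) ≤ 0`. Along the segment from `x₀` to `x`, `φ` is convex,
and Minty's inequality says it does not decrease to first order when moving towards `x₀`;
together these bound `φ` on the open segment by `φ(x)`. The values of `f` are closed, convex and
stable under adding `C`, so separation by functionals in `C⁻ \ {0}` turns such scalar bounds into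
inclusions: `f x` lies in `cl co` of the values of `f` near `x₀`, which lattice lower
semicontinuity puts inside `f x₀`; in the scalar version, lower semicontinuity gives
`φ(x₀) ≤ φ(x)` for every `z*`, hence `f x ⊆ f x₀`. Either way `f x₀` contains every value of `f`,
which is the equality `f(x₀) = cl co ⋃ f(x)`; conversely such an `f x₀` makes both conditions
trivial.
-/

section Scalarization

variable {Z : Type*} [AddCommGroup Z] [Module ℝ Z] [TopologicalSpace Z]

lemma lt_coe_add_of_eresid_lt {r : EReal} {s c : ℝ} (h : eresid r s < c) :
    r < ((s + c : ℝ) : EReal) := by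
  obtain ⟨_, ⟨t, ht, rfl⟩, htc⟩ := sInf_lt_iff.1 h
  refine ht.trans_lt ?_
  rw [← EReal.coe_add, EReal.coe_lt_coe_iff]
  linarith [EReal.coe_lt_coe_iff.1 htc]

lemma scal_le_of_mem (p : Z →L[ℝ] ℝ) {A : Set Z} {z : Z} (hz : z ∈ A) :
    scal p A ≤ ((-(p z) : ℝ) : EReal) :=
  sInf_le ⟨z, hz, rfl⟩

lemma scal_anti (p : Z →L[ℝ] ℝ) {A B : Set Z} (h : A ⊆ B) : scal p B ≤ scal p A :=
  sInf_le_sInf (image_mono h)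

lemma scal_ne_top (p : Z →L[ℝ] ℝ) {A : Set Z} (hA : A.Nonempty) : scal p A ≠ ⊤ :=
  ne_top_of_le_ne_top (EReal.coe_ne_top _) (scal_le_of_mem p hA.some_mem)

lemma le_scal_iff (p : Z →L[ℝ] ℝ) {A : Set Z} {r : EReal} :
    r ≤ scal p A ↔ ∀ z ∈ A, r ≤ ((-(p z) : ℝ) : EReal) := by
  simp only [scal, le_sInf_iff, forall_mem_image]

lemma scal_le_add_of_add_singleton_subset (p : Z →L[ℝ] ℝ) {A B : Set Z} {z : Z}
    (h : B + {z} ⊆ A) : scal p A ≤ scal p B + ((-(p z) : ℝ) : EReal) := by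
  refine EReal.le_of_forall_lt_iff_le.1 fun w hw => ?_
  have hB : scal p B < ((w + p z : ℝ) : EReal) := by
    rw [← sub_neg_eq_add, EReal.coe_sub]
    exact (EReal.lt_sub_iff_add_lt (.inl (EReal.coe_ne_bot _)) (.inl (EReal.coe_ne_top _))).2 hw
  obtain ⟨_, ⟨b, hb, rfl⟩, hbw⟩ := sInf_lt_iff.1 hB
  refine (scal_le_of_mem p (h (add_mem_add hb rfl))).trans (EReal.coe_le_coe_iff.2 ?_)
  rw [map_add]
  linarith [EReal.coe_lt_coe_iff.1 hbw]

end Scalarization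

section Derivative

variable {Z : Type*} [AddCommGroup Z] [Module ℝ Z] [TopologicalSpace Z]
  {X : Type*} [AddCommGroup X] [Module ℝ X] {f : X → Set Z} {p : Z →L[ℝ] ℝ}

lemma ConvexSV.phi_smul_add_smul_le (hf : ConvexSV f) {a b : X} {l A B : ℝ}
    (hl : l ∈ Ioo (0:ℝ) 1) (ha : phi f p a < A) (hb : phi f p b < B) :
    phi f p (l • a + (1 - l) • b) ≤ ((l * A + (1 - l) * B : ℝ) : EReal) := by
  obtain ⟨_, ⟨z₁, hz₁, rfl⟩, h₁⟩ := sInf_lt_iff.1 ha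
  obtain ⟨_, ⟨z₂, hz₂, rfl⟩, h₂⟩ := sInf_lt_iff.1 hb
  have hmem : l • z₁ + (1 - l) • z₂ ∈ f (l • a + (1 - l) • b) :=
    hf a b l hl (subset_closure (add_mem_add (smul_mem_smul_set hz₁) (smul_mem_smul_set hz₂)))
  refine (scal_le_of_mem p hmem).trans (EReal.coe_le_coe_iff.2 ?_)
  rw [map_add, map_smul, map_smul, smul_eq_mul, smul_eq_mul]
  nlinarith [EReal.coe_lt_coe_iff.1 h₁, EReal.coe_lt_coe_iff.1 h₂, hl.1, hl.2]

lemma exists_phi_add_smul_lt_of_phiDer_lt {x u : X} {A ε : ℝ} (hA : phi f p x = A)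
    (h : phiDer f p x u < ε) : ∃ t > 0, phi f p (x + t • u) < ((A + t * ε : ℝ) : EReal) := by
  simp only [phiDer, iInf_lt_iff, mem_Ioi] at h
  obtain ⟨t, ht, hq⟩ := h
  refine ⟨t, ht, lt_coe_add_of_eresid_lt ?_⟩
  rw [← hA]
  by_contra! hle
  refine hq.not_ge ?_
  calc (ε : EReal) = ((1 / t : ℝ) : EReal) * ((t * ε : ℝ) : EReal) := by
        rw [← EReal.coe_mul]; field_simp
    _ ≤ _ := mul_le_mul_of_nonneg_left hle (EReal.coe_nonneg.2 (by positivity))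

lemma phiDer_le_of_mem_resid {x u : X} {t : ℝ} {z : Z} (ht : 0 < t)
    (hz : z ∈ resid (f (x + t • u)) (f x)) :
    phiDer f p x u ≤ ((-(p ((1 / t) • z)) : ℝ) : EReal) := by
  calc phiDer f p x u ≤ ((1 / t : ℝ) : EReal) * eresid (phi f p (x + t • u)) (phi f p x) :=
        iInf₂_le t ht
    _ ≤ ((1 / t : ℝ) : EReal) * ((-(p z) : ℝ) : EReal) :=
        mul_le_mul_of_nonneg_left (sInf_le ⟨_, scal_le_add_of_add_singleton_subset p hz, rfl⟩)
          (EReal.coe_nonneg.2 (by positivity))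
    _ = ((-(p ((1 / t) • z)) : ℝ) : EReal) := by
        rw [← EReal.coe_mul, map_smul, smul_eq_mul, mul_neg]

lemma phiDer_nonpos_of_zero_mem_sder {x u : X} (h : (0:Z) ∈ sder f x u) :
    phiDer f p x u ≤ 0 := by
  by_contra! hpos
  obtain ⟨m, hm0, hm⟩ := EReal.exists_between_coe_real hpos
  have hU : ⋃ t ∈ Ioo (0:ℝ) 1, (1 / t) • resid (f (x + t • u)) (f x) ⊆ p ⁻¹' Iic (-m) := by
    simp only [iUnion_subset_iff]
    rintro t ⟨ht, -⟩ _ ⟨z, hz, rfl⟩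
    have := hm.trans_le (phiDer_le_of_mem_resid ht hz)
    simp only [mem_preimage, mem_Iic]
    linarith [EReal.coe_lt_coe_iff.1 this]
  have h0 := closure_minimal (convexHull_min hU ((convex_Iic _).linear_preimage p.toLinearMap))
    (isClosed_Iic.preimage p.continuous) (mem_iInter₂.1 h 1 (mem_Ioi.2 one_pos))
  simp only [mem_preimage, map_zero, mem_Iic] at h0
  linarith [EReal.coe_pos.1 hm0]

end Derivative

section Minty

variable {Z : Type*} [AddCommGroup Z] [Module ℝ Z] [TopologicalSpace Z]
  {X : Type*} [AddCommGroup X] [Module ℝ X] {f : X → Set Z} {p : Z →L[ℝ] ℝ}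

/- Writing `y = x₀ + a • (x - x₀)`, Minty's inequality at `y` gives a point `x₀ + τ • (x - x₀)`
with `τ < a` at which `φ` exceeds `φ(y)` by at most `tε`; since `y` is a convex combination of
that point and `x`, this forces `φ(y) ≤ φ(x)` up to an error proportional to `ε`. -/
lemma ConvexSV.phi_segment_sub_le_of_minty (hf : ConvexSV f) {x₀ x : X}
    (hm : ∀ y, phiDer f p y (x₀ - y) ≤ 0) {a A r ε : ℝ} (ha : a ∈ Ioo (0:ℝ) 1)
    (hA : phi f p (x₀ + a • (x - x₀)) = A) (hx : phi f p x < r) (hε : 0 < ε) :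
    a * (A - r) ≤ (1 - a) * ε := by
  obtain ⟨ha0, ha1⟩ := ha
  obtain ⟨t, ht, hlt⟩ :=
    exists_phi_add_smul_lt_of_phiDer_lt hA ((hm _).trans_lt (EReal.coe_pos.2 hε))
  set τ := a * (1 - t)
  have hpt : x₀ + a • (x - x₀) + t • (x₀ - (x₀ + a • (x - x₀))) = x₀ + τ • (x - x₀) := by
    module
  rw [hpt] at hlt
  have hτ : 0 < 1 - τ := by nlinarith
  set l := (1 - a) / (1 - τ)
  have hl : l * (1 - τ) = 1 - a := div_mul_cancel₀ _ hτ.ne'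
  have hl0 : 0 < l := div_pos (by linarith) hτ
  have hl1 : l < 1 := (div_lt_one hτ).2 (by nlinarith)
  have hcomb : l • (x₀ + τ • (x - x₀)) + (1 - l) • x = x₀ + a • (x - x₀) := by
    have : l * τ + (1 - l) = a := by linear_combination -hl
    rw [← this]
    module
  have h := hf.phi_smul_add_smul_le ⟨hl0, hl1⟩ hlt hx
  rw [hcomb, hA, EReal.coe_le_coe_iff] at h
  have h' : A * (1 - τ) ≤ (1 - a) * (A + t * ε) + a * t * r := by
    calc A * (1 - τ) ≤ (l * (A + t * ε) + (1 - l) * r) * (1 - τ) :=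
          mul_le_mul_of_nonneg_right h hτ.le
      _ = (1 - a) * (A + t * ε) + a * t * r := by linear_combination (A + t * ε - r) * hl
  have : t * (a * (A - r)) ≤ t * ((1 - a) * ε) := by linear_combination h'
  exact le_of_mul_le_mul_left this ht

lemma ConvexSV.phi_segment_le_of_minty (hf : ConvexSV f) {x₀ : X} (hx₀ : phi f p x₀ ≠ ⊤)
    (hm : ∀ y, phiDer f p y (x₀ - y) ≤ 0) (x : X) {a : ℝ} (ha : a ∈ Ioo (0:ℝ) 1) :
    phi f p (x₀ + a • (x - x₀)) ≤ phi f p x := by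
  by_contra! hlt
  obtain ⟨r, hxr, hr⟩ := EReal.exists_between_coe_real hlt
  obtain ⟨K, hK, -⟩ := EReal.exists_between_coe_real hx₀.lt_top
  have hup : phi f p (x₀ + a • (x - x₀)) ≤ (((1 - a) * K + (1 - (1 - a)) * r : ℝ) : EReal) := by
    convert hf.phi_smul_add_smul_le (l := 1 - a) ⟨by linarith [ha.2], by linarith [ha.1]⟩ hK hxr
      using 2
    module
  set A := (phi f p (x₀ + a • (x - x₀))).toReal
  have hA : phi f p (x₀ + a • (x - x₀)) = A :=
    (EReal.coe_toReal (ne_top_of_le_ne_top (EReal.coe_ne_top _) hup) (ne_bot_of_gt hr)).symm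
  have hrA : r < A := EReal.coe_lt_coe_iff.1 (hA ▸ hr)
  have h1a : 0 < 1 - a := by linarith [ha.2]
  have hε : (1 - a) * (a * (A - r) / (2 * (1 - a))) = a * (A - r) / 2 := by
    field_simp
  have hpos : 0 < a * (A - r) := mul_pos ha.1 (sub_pos.2 hrA)
  have := hf.phi_segment_sub_le_of_minty hm ha hA hxr
    (ε := a * (A - r) / (2 * (1 - a))) (div_pos hpos (mul_pos two_pos h1a))
  rw [hε] at this
  linarith

end Minty

lemma le_of_lsc_of_forall_Ioo_le {ψ : ℝ → EReal} {c : EReal}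
    (hψ : ∀ r : ℝ, (r : EReal) < ψ 0 →
      ∃ t₀ ∈ Ioc (0:ℝ) 1, ∀ t ∈ Ico (0:ℝ) t₀, (r : EReal) < ψ t)
    (hc : ∀ t ∈ Ioo (0:ℝ) 1, ψ t ≤ c) : ψ 0 ≤ c := by
  by_contra! hlt
  obtain ⟨r, hcr, hr⟩ := EReal.exists_between_coe_real hlt
  obtain ⟨t₀, ⟨ht₀, ht₁⟩, hψr⟩ := hψ r hr
  have := hψr (t₀ / 2) ⟨by positivity, by linarith⟩
  exact (hc (t₀ / 2) ⟨by positivity, by linarith⟩).not_gt (hcr.trans this)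

section Separation

variable {Z : Type*} [AddCommGroup Z] [Module ℝ Z] [TopologicalSpace Z]
  [IsTopologicalAddGroup Z] [ContinuousSMul ℝ Z] [LocallyConvexSpace ℝ Z]

/- Hahn–Banach separates `z` from `cl co V`; since `V` is stable under adding the cone `C`,
the separating functional is bounded above on `C`, hence lies in `C⁻`. -/
lemma mem_closure_convexHull_of_forall_scal_le {C V : Set Z}
    (hC : ∀ c ∈ C, ∀ r : ℝ, 0 < r → r • c ∈ C) (hV : V.Nonempty)
    (hVC : ∀ v ∈ V, ∀ c ∈ C, v + c ∈ V) {z : Z}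
    (h : ∀ p ∈ negDualNZ C, scal p V ≤ ((-(p z) : ℝ) : EReal)) :
    z ∈ closure (convexHull ℝ V) := by
  by_contra hz
  obtain ⟨p, u, hpV, hpz⟩ :=
    geometric_hahn_banach_closed_point (convex_convexHull ℝ V).closure isClosed_closure hz
  replace hpV : ∀ v ∈ V, p v < u := fun v hv => hpV v (subset_closure (subset_convexHull ℝ V hv))
  obtain ⟨v, hv⟩ := hV
  have hpC : ∀ c ∈ C, p c ≤ 0 := by
    intro c hc
    by_contra! hpc
    have := hpV _ (hVC v hv _ (hC c hc _ (div_pos (sub_pos.2 (hpV v hv)) hpc)))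
    rw [map_add, map_smul, smul_eq_mul, div_mul_cancel₀ _ hpc.ne'] at this
    linarith
  have hp0 : p ≠ 0 := by
    rintro rfl
    have := hpV v hv
    simp only [zero_apply] at this hpz
    linarith
  have hu : ((-u : ℝ) : EReal) ≤ scal p V :=
    (le_scal_iff p).2 fun w hw => EReal.coe_le_coe_iff.2 (by linarith [hpV w hw])
  have := hu.trans (h p ⟨hpC, hp0⟩)
  linarith [EReal.coe_le_coe_iff.1 this]

end Separation

namespace IsG

variable {Z : Type*} [AddCommGroup Z] [Module ℝ Z] [TopologicalSpace Z] {C A : Set Z}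

lemma isClosed_s13 (h : IsG C A) : IsClosed A := h ▸ isClosed_closure

lemma convex_s13 [IsTopologicalAddGroup Z] [ContinuousSMul ℝ Z] (h : IsG C A) : Convex ℝ A :=
  h ▸ (convex_convexHull ℝ _).closure

lemma add_mem (h : IsG C A) {a c : Z} (ha : a ∈ A) (hc : c ∈ C) : a + c ∈ A := by
  rw [h]
  exact subset_closure (subset_convexHull ℝ _ (add_mem_add ha hc))

end IsG

lemma eq_closure_convexHull_iUnion_iff {Z ι : Type*} [AddCommGroup Z] [Module ℝ Z]
    [TopologicalSpace Z] {f : ι → Set Z} {i₀ : ι} (hc : IsClosed (f i₀))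
    (hconv : Convex ℝ (f i₀)) :
    f i₀ = closure (convexHull ℝ (⋃ i, f i)) ↔ ∀ i, f i ⊆ f i₀ := by
  have hsub : ∀ i, f i ⊆ closure (convexHull ℝ (⋃ i, f i)) := fun i =>
    (subset_iUnion f i).trans ((subset_convexHull ℝ _).trans subset_closure)
  exact ⟨fun h i => h ▸ hsub i, fun h =>
    (hsub i₀).antisymm (closure_minimal (convexHull_min (iUnion_subset h) hconv) hc)⟩

section Characterization

variable {Z : Type*} [AddCommGroup Z] [Module ℝ Z] [TopologicalSpace Z]
  {X : Type*} [AddCommGroup X] [Module ℝ X] {f : X → Set Z} {x₀ : X}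

lemma ConvexSV.zero_mem_sder (hf : ConvexSV f) {x : X} (h : f x ⊆ f x₀) :
    (0:Z) ∈ sder f x (x₀ - x) := by
  refine mem_iInter₂.2 fun t₀ ht₀ => subset_closure (subset_convexHull ℝ _ ?_)
  have hmin : 0 < min t₀ 1 := lt_min ht₀ one_pos
  set t := min t₀ 1 / 2 with ht_def
  have ht : t ∈ Ioo (0:ℝ) 1 := ⟨half_pos hmin, by linarith [min_le_right t₀ 1]⟩
  have hsub : f x ⊆ f (x + t • (x₀ - x)) := fun z hz => by
    have := hf x₀ x t ht (subset_closure (add_mem_add (smul_mem_smul_set (h hz))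
      (smul_mem_smul_set hz)))
    rwa [← add_smul, add_sub_cancel, one_smul,
      show t • x₀ + (1 - t) • x = x + t • (x₀ - x) by module] at this
  refine mem_iUnion₂.2 ⟨t, ⟨ht.1, by linarith [min_le_left t₀ 1]⟩,
    ⟨0, fun w hw => ?_, smul_zero _⟩⟩
  obtain ⟨z, hz, _, rfl, rfl⟩ := hw
  simpa using hsub hz

variable [IsTopologicalAddGroup Z] [ContinuousSMul ℝ Z] [LocallyConvexSpace ℝ Z] {C : Set Z}

lemma subset_iInter_closure_convexHull_segment (hC : ∀ c ∈ C, ∀ r : ℝ, 0 < r → r • c ∈ C)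
    (hG : ∀ x, IsG C (f x)) (hf : ConvexSV f) (hx₀ : (f x₀).Nonempty)
    (hm : ∀ y, ∀ p ∈ negDualNZ C, phiDer f p y (x₀ - y) ≤ 0) (x : X) :
    f x ⊆ ⋂ t₀ ∈ Ioc (0:ℝ) 1,
      closure (convexHull ℝ (⋃ t ∈ Ico (0:ℝ) t₀, f (x₀ + t • (x - x₀)))) := by
  refine subset_iInter₂ fun t₀ ht₀ z hz => ?_
  set V := ⋃ t ∈ Ico (0:ℝ) t₀, f (x₀ + t • (x - x₀))
  have hseg : ∀ t ∈ Ico (0:ℝ) t₀, f (x₀ + t • (x - x₀)) ⊆ V :=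
    fun t ht => subset_iUnion₂_of_subset t ht subset_rfl
  refine mem_closure_convexHull_of_forall_scal_le hC ?_ ?_ fun p hp => ?_
  · exact hx₀.mono (by simpa using hseg 0 ⟨le_rfl, ht₀.1⟩)
  · simp only [V, mem_iUnion₂]
    exact fun v ⟨t, ht, hv⟩ c hc => ⟨t, ht, (hG _).add_mem hv hc⟩
  · have ht : t₀ / 2 ∈ Ioo (0:ℝ) 1 := ⟨by linarith [ht₀.1], by linarith [ht₀.2]⟩
    calc scal p V ≤ phi f p (x₀ + (t₀ / 2) • (x - x₀)) :=
          scal_anti p (hseg _ ⟨ht.1.le, by linarith [ht.1]⟩)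
      _ ≤ phi f p x := hf.phi_segment_le_of_minty (scal_ne_top p hx₀) (fun y => hm y p hp) x ht
      _ ≤ _ := scal_le_of_mem p hz

lemma subset_of_minty_of_lsc (hC : ∀ c ∈ C, ∀ r : ℝ, 0 < r → r • c ∈ C)
    (hG : ∀ x, IsG C (f x)) (hf : ConvexSV f) (hx₀ : (f x₀).Nonempty)
    (hm : ∀ y, ∀ p ∈ negDualNZ C, phiDer f p y (x₀ - y) ≤ 0)
    (hlsc : ∀ x, ∀ p ∈ negDualNZ C, ∀ r : ℝ, (r : EReal) < phi f p x₀ →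
      ∃ t₀ ∈ Ioc (0:ℝ) 1, ∀ t ∈ Ico (0:ℝ) t₀, (r : EReal) < phi f p (x₀ + t • (x - x₀)))
    (x : X) : f x ⊆ f x₀ := by
  intro z hz
  rw [← (hG x₀).isClosed_s13.closure_eq, ← (hG x₀).convex_s13.convexHull_eq]
  refine mem_closure_convexHull_of_forall_scal_le hC hx₀ (fun v hv c hc => (hG x₀).add_mem hv hc)
    fun p hp => le_trans (b := phi f p x) ?_ (scal_le_of_mem p hz)
  show phi f p x₀ ≤ phi f p x
  simpa only [zero_smul, add_zero] using le_of_lsc_of_forall_Ioo_le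
    (ψ := fun t => phi f p (x₀ + t • (x - x₀)))
    (by simpa only [zero_smul, add_zero] using hlsc x p hp)
    fun t ht => hf.phi_segment_le_of_minty (scal_ne_top p hx₀) (fun y => hm y p hp) x ht

end Characterization

theorem stmt_13_general
  {Z : Type*} [AddCommGroup Z] [Module ℝ Z] [TopologicalSpace Z]
  [IsTopologicalAddGroup Z] [ContinuousSMul ℝ Z] [LocallyConvexSpace ℝ Z]
  {X : Type*} [AddCommGroup X] [Module ℝ X]
  (C : Set Z)
  (hCcone : ∀ c ∈ C, ∀ r : ℝ, 0 < r → r • c ∈ C)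
  (f : X → Set Z) (hG : ∀ x, IsG C (f x)) (hf : ConvexSV f)
  (x₀ : X) (hx₀ : (f x₀).Nonempty) :
    ((f x₀ = closure (convexHull ℝ (⋃ x : X, f x))) ↔
      ((∀ x : X, (0:Z) ∈ sder f x (x₀ - x))
        ∧ (∀ x : X, ⋂ t₀ ∈ Ioc (0:ℝ) 1, closure (convexHull ℝ
        (⋃ t ∈ Ico (0:ℝ) t₀, f (x₀ + t • (x - x₀)))) ⊆ f x₀)))
    ∧ (((∀ x : X, ∀ p ∈ negDualNZ C, phiDer f p x (x₀ - x) ≤ 0)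
        ∧ (∀ x : X, ∀ p ∈ negDualNZ C, ∀ r : ℝ, (r : EReal) < phi f p x₀ →
        ∃ t₀ ∈ Ioc (0:ℝ) 1, ∀ t ∈ Ico (0:ℝ) t₀, (r : EReal) < phi f p (x₀ + t • (x - x₀)))) →
        (f x₀ = closure (convexHull ℝ (⋃ x : X, f x)))) := by
  rw [eq_closure_convexHull_iUnion_iff (hG x₀).isClosed_s13 (hG x₀).convex_s13]
  refine ⟨⟨fun h => ⟨fun x => hf.zero_mem_sder (h x), fun x => ?_⟩, fun ⟨hmvi, hlat⟩ x => ?_⟩,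
    fun ⟨hmvi, hlsc⟩ => subset_of_minty_of_lsc hCcone hG hf hx₀ hmvi hlsc⟩
  · exact (iInter₂_subset 1 ⟨one_pos, le_rfl⟩).trans <| closure_minimal
      (convexHull_min (iUnion₂_subset fun t _ => h _) (hG x₀).convex_s13) (hG x₀).isClosed_s13
  · have hscalar : ∀ y, ∀ p ∈ negDualNZ C, phiDer f p y (x₀ - y) ≤ 0 :=
      fun y p _ => phiDer_nonpos_of_zero_mem_sder (hmvi y)
    exact (subset_iInter_closure_convexHull_segment hCcone hG hf hx₀ hscalar x).trans (hlat x)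

theorem stmt_13
  {Z : Type*} [AddCommGroup Z] [Module ℝ Z] [TopologicalSpace Z]
  [IsTopologicalAddGroup Z] [ContinuousSMul ℝ Z] [LocallyConvexSpace ℝ Z] [T2Space Z]
  {X : Type*} [AddCommGroup X] [Module ℝ X]
  (C : Set Z) (hCclosed : IsClosed C) (hCconv : Convex ℝ C)
  (hCcone : ∀ c ∈ C, ∀ r : ℝ, 0 < r → r • c ∈ C) (hC0 : (0:Z) ∈ C)
  (hdual : (negDualNZ C).Nonempty)
  (f : X → Set Z) (hG : ∀ x, IsG C (f x)) (hf : ConvexSV f)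
  (x₀ : X) (hx₀ : (f x₀).Nonempty) :
    ((f x₀ = closure (convexHull ℝ (⋃ x : X, f x))) ↔
      ((∀ x : X, (0:Z) ∈ sder f x (x₀ - x))
        ∧ (∀ x : X, ⋂ t₀ ∈ Ioc (0:ℝ) 1, closure (convexHull ℝ
        (⋃ t ∈ Ico (0:ℝ) t₀, f (x₀ + t • (x - x₀)))) ⊆ f x₀)))
    ∧ (((∀ x : X, ∀ p ∈ negDualNZ C, phiDer f p x (x₀ - x) ≤ 0)
        ∧ (∀ x : X, ∀ p ∈ negDualNZ C, ∀ r : ℝ, (r : EReal) < phi f p x₀ →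
        ∃ t₀ ∈ Ioc (0:ℝ) 1, ∀ t ∈ Ico (0:ℝ) t₀, (r : EReal) < phi f p (x₀ + t • (x - x₀)))) →
        (f x₀ = closure (convexHull ℝ (⋃ x : X, f x)))) :=
  stmt_13_general C hCcone f hG hf x₀ hx₀
end
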